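/- arXiv:2212.12104 — 3 statements merged into one kernel-verified Lean document; each statement's English description precedes it below -/
import Mathlib

section
/- Let F = F₁ ∪ F₂ over schema R with all attributes in Att(F₁) ∩ Att(F₂) certain, and let U be a CIR over R. If r₁ is a most probable consistent sample of π_{Att(F₁)}U w.r.t. F₁, r₂ is a most probable consistent sample of π_{Att(F₂)}U w.r.t. F₂, and r' is any sample of maximum probability of π_{R∖Att(F)}U, then the combined relation r₁ + r₂ + r' (the natural join of the three tuples per identifier, well-defined since the projections agree on common certain attributes) is a most probable consistent sample of U with respect to F. -/
/-!
The probability of a sample is a product over independent cells, and a certain cell has a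
single value of positive probability, whose probability is `1`. So `r₁` and `r₂` agree on
`Att(F₁) ∩ Att(F₂)`, the join restricts to `r₁`, `r₂`, `r'` on `Att(F₁)`, `Att(F₂)` and the
remaining attributes, and for every sample positive on the overlap the weight is the product of
its weights on these three sets (the overlap is counted twice, but only contributes a factor `1`).
Consistency with `Fₖ` only depends on the values on `Att(Fₖ)`, so the three factors are
maximised independently.
-/

open Finset

section SampleWeight

variable {Att V ι : Type} [Fintype ι] (p : ι → Att → V → ℝ)

def sampleWeight (B : Finset Att) (s : ι → Att → V) : ℝ :=
  ∏ i, ∏ a ∈ B, p i a (s i a)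

lemma sampleWeight_congr {B : Finset Att} {s t : ι → Att → V}
    (h : ∀ i, ∀ a ∈ B, s i a = t i a) : sampleWeight p B s = sampleWeight p B t :=
  prod_congr rfl fun i _ => prod_congr rfl fun a ha => by rw [h i a ha]

lemma sampleWeight_union [DecidableEq Att] {B C : Finset Att} (h : Disjoint B C)
    (s : ι → Att → V) :
    sampleWeight p (B ∪ C) s = sampleWeight p B s * sampleWeight p C s := by
  simp only [sampleWeight, prod_union h, prod_mul_distrib]

lemma sampleWeight_inter_mul_sdiff [DecidableEq Att] (B C : Finset Att) (s : ι → Att → V) :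
    sampleWeight p (C ∩ B) s * sampleWeight p (C \ B) s = sampleWeight p C s := by
  simp only [sampleWeight, ← prod_mul_distrib, prod_inter_mul_prod_sdiff]

lemma sampleWeight_nonneg (hnn : ∀ i a v, 0 ≤ p i a v) (B : Finset Att) (s : ι → Att → V) :
    0 ≤ sampleWeight p B s :=
  prod_nonneg fun i _ => prod_nonneg fun a _ => hnn i a _

lemma sampleWeight_pos {B : Finset Att} {s : ι → Att → V}
    (h : ∀ i, ∀ a ∈ B, 0 < p i a (s i a)) : 0 < sampleWeight p B s :=
  prod_pos fun i _ => prod_pos fun a ha => h i a ha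

lemma pos_of_sampleWeight_pos (hnn : ∀ i a v, 0 ≤ p i a v) {B : Finset Att}
    {s : ι → Att → V} (h : 0 < sampleWeight p B s) : ∀ i, ∀ a ∈ B, 0 < p i a (s i a) := by
  have hne := h.ne'
  simp only [sampleWeight, prod_ne_zero_iff, mem_univ, true_imp_iff] at hne
  exact fun i a ha => (hnn i a _).lt_of_ne' (hne i a ha)

lemma exists_sampleWeight_pos [Fintype V] (hsum : ∀ i a, ∑ v, p i a v = 1)
    (B : Finset Att) : ∃ s, 0 < sampleWeight p B s := by
  have hsupp : ∀ i a, ∃ v, 0 < p i a v := fun i a => by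
    obtain ⟨v, -, hv⟩ := exists_lt_of_sum_lt (s := univ) (f := fun _ => (0 : ℝ)) (g := p i a)
      (by simp [hsum i a])
    exact ⟨v, hv⟩
  choose s hs using hsupp
  exact ⟨s, sampleWeight_pos p fun i a _ => hs i a⟩

lemma sampleWeight_pos_of_forall_le [Fintype V] (hsum : ∀ i a, ∑ v, p i a v = 1)
    {B : Finset Att} {s₀ : ι → Att → V} (hmax : ∀ s, sampleWeight p B s ≤ sampleWeight p B s₀) :
    0 < sampleWeight p B s₀ :=
  let ⟨s, hs⟩ := exists_sampleWeight_pos p hsum B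
  hs.trans_le (hmax s)

end SampleWeight

section Certain

variable {Att V ι : Type} (p : ι → Att → V → ℝ)

def IsCertain [DecidableEq V] (i : ι) (a : Att) : Prop :=
  ∃ v, ∀ w, p i a w = if w = v then 1 else 0

variable {p} [DecidableEq V]

lemma IsCertain.eq_of_pos {i : ι} {a : Att} {u u' : V} (h : IsCertain p i a)
    (hu : 0 < p i a u) (hu' : 0 < p i a u') : u = u' := by
  obtain ⟨v, hv⟩ := h
  rw [hv] at hu hu'
  split_ifs at hu hu' <;> simp_all

lemma IsCertain.eq_one_of_pos {i : ι} {a : Att} {u : V} (h : IsCertain p i a)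
    (hu : 0 < p i a u) : p i a u = 1 := by
  obtain ⟨v, hv⟩ := h
  rw [hv] at hu ⊢
  split_ifs at hu ⊢ <;> simp_all

lemma eqOn_inter_of_isCertain [DecidableEq Att] {A₁ A₂ : Finset Att} {s₁ s₂ : ι → Att → V}
    (hc : ∀ i, ∀ a ∈ A₁ ∩ A₂, IsCertain p i a) (hs₁ : ∀ i, ∀ a ∈ A₁, 0 < p i a (s₁ i a))
    (hs₂ : ∀ i, ∀ a ∈ A₂, 0 < p i a (s₂ i a)) : ∀ i, ∀ a ∈ A₁ ∩ A₂, s₁ i a = s₂ i a :=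
  fun i a ha => (hc i a ha).eq_of_pos (hs₁ i a (mem_inter.1 ha).1) (hs₂ i a (mem_inter.1 ha).2)

variable [Fintype ι]

lemma sampleWeight_eq_one_of_isCertain {B : Finset Att} {s : ι → Att → V}
    (hc : ∀ i, ∀ a ∈ B, IsCertain p i a) (hs : ∀ i, ∀ a ∈ B, 0 < p i a (s i a)) :
    sampleWeight p B s = 1 :=
  prod_eq_one fun i _ => prod_eq_one fun a ha => (hc i a ha).eq_one_of_pos (hs i a ha)

lemma sampleWeight_univ_eq_mul_of_isCertain [Fintype Att] [DecidableEq Att]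
    {A₁ A₂ : Finset Att} {s : ι → Att → V} (hc : ∀ i, ∀ a ∈ A₁ ∩ A₂, IsCertain p i a)
    (hs : ∀ i, ∀ a ∈ A₁ ∩ A₂, 0 < p i a (s i a)) :
    sampleWeight p univ s =
      sampleWeight p A₁ s * sampleWeight p A₂ s * sampleWeight p (univ \ (A₁ ∪ A₂)) s := by
  have hA₂ : sampleWeight p (A₂ \ A₁) s = sampleWeight p A₂ s := by
    rw [← sampleWeight_inter_mul_sdiff p A₁ A₂ s, inter_comm,
      sampleWeight_eq_one_of_isCertain hc hs, one_mul]
  rw [← hA₂, ← sampleWeight_union p disjoint_sdiff, union_sdiff_self_eq_union,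
    ← sampleWeight_union p disjoint_sdiff, union_sdiff_of_subset (subset_univ _)]

end Certain

section Join

variable {Att V ι : Type} [DecidableEq Att]

def join (A₁ A₂ : Finset Att) (s₁ s₂ s' : ι → Att → V) : ι → Att → V :=
  fun i a => if a ∈ A₁ then s₁ i a else if a ∈ A₂ then s₂ i a else s' i a

variable {A₁ A₂ : Finset Att} {s₁ s₂ s' : ι → Att → V}

lemma join_eqOn_left : ∀ i, ∀ a ∈ A₁, s₁ i a = join A₁ A₂ s₁ s₂ s' i a :=
  fun _ _ ha => (if_pos ha).symm

lemma join_eqOn_right (h : ∀ i, ∀ a ∈ A₁ ∩ A₂, s₁ i a = s₂ i a) :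
    ∀ i, ∀ a ∈ A₂, s₂ i a = join A₁ A₂ s₁ s₂ s' i a := fun i a ha => by
  by_cases ha₁ : a ∈ A₁
  · rw [← join_eqOn_left i a ha₁, h i a (mem_inter.2 ⟨ha₁, ha⟩)]
  · simp only [join, if_neg ha₁, if_pos ha]

lemma join_eqOn_sdiff [Fintype Att] :
    ∀ i, ∀ a ∈ univ \ (A₁ ∪ A₂), s' i a = join A₁ A₂ s₁ s₂ s' i a := fun i a ha => by
  simp only [mem_sdiff, mem_union, not_or] at ha
  simp only [join, if_neg ha.2.1, if_neg ha.2.2]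

variable [Fintype Att] [Fintype ι] [DecidableEq V] {p : ι → Att → V → ℝ}

lemma sampleWeight_join (hc : ∀ i, ∀ a ∈ A₁ ∩ A₂, IsCertain p i a)
    (hs₁ : ∀ i, ∀ a ∈ A₁, 0 < p i a (s₁ i a)) (hs₂ : ∀ i, ∀ a ∈ A₂, 0 < p i a (s₂ i a)) :
    sampleWeight p univ (join A₁ A₂ s₁ s₂ s') =
      sampleWeight p A₁ s₁ * sampleWeight p A₂ s₂ * sampleWeight p (univ \ (A₁ ∪ A₂)) s' := by
  have hpos : ∀ i, ∀ a ∈ A₁ ∩ A₂, 0 < p i a (join A₁ A₂ s₁ s₂ s' i a) := fun i a ha => by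
    rw [← join_eqOn_left i a (mem_inter.1 ha).1]
    exact hs₁ i a (mem_inter.1 ha).1
  rw [sampleWeight_univ_eq_mul_of_isCertain hc hpos, ← sampleWeight_congr p join_eqOn_left,
    ← sampleWeight_congr p (join_eqOn_right (eqOn_inter_of_isCertain hc hs₁ hs₂)),
    ← sampleWeight_congr p join_eqOn_sdiff]

end Join

section FunctionalDependency

variable {Att V ι : Type}

def Satisfies (G : Finset (Finset Att × Finset Att)) (s : ι → Att → V) : Prop :=
  ∀ fd ∈ G, ∀ i j, (∀ a ∈ fd.1, s i a = s j a) → ∀ a ∈ fd.2, s i a = s j a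

def fdAttrs [DecidableEq Att] (G : Finset (Finset Att × Finset Att)) : Finset Att :=
  G.sup fun fd => fd.1 ∪ fd.2

lemma satisfies_union [DecidableEq Att] {G H : Finset (Finset Att × Finset Att)}
    {s : ι → Att → V} : Satisfies (G ∪ H) s ↔ Satisfies G s ∧ Satisfies H s :=
  forall_mem_union

lemma Satisfies.congr [DecidableEq Att] {G : Finset (Finset Att × Finset Att)}
    {s t : ι → Att → V} (h : Satisfies G s) (hst : ∀ i, ∀ a ∈ fdAttrs G, s i a = t i a) :
    Satisfies G t := by
  intro fd hfd i j hlhs a ha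
  have hsub : fd.1 ∪ fd.2 ⊆ fdAttrs G := le_sup (f := fun fd => fd.1 ∪ fd.2) hfd
  have hst' : ∀ b ∈ fd.1 ∪ fd.2, s i b = s j b ↔ t i b = t j b := fun b hb => by
    rw [hst i b (hsub hb), hst j b (hsub hb)]
  exact (hst' a (mem_union_right _ ha)).1 <|
    h fd hfd i j (fun b hb => (hst' b (mem_union_left _ hb)).2 (hlhs b hb)) a ha

end FunctionalDependency

open Classical in
/-- Let `F = F₁ ∪ F₂` over schema `R` with all attributes of
`Att(F₁) ∩ Att(F₂)` certain (deterministic point-mass cells).  If `s1` is a most probable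
consistent sample of `π_{Att(F₁)}U` w.r.t. `F₁`, `s2` is a most probable consistent sample of
`π_{Att(F₂)}U` w.r.t. `F₂`, and `s'` is a maximum-probability sample of `π_{R∖Att(F)}U`, then
the combined relation (joining `s1` on `Att(F₁)`, `s2` on `Att(F₂)∖Att(F₁)` and `s'` on the
remaining attributes) is a most probable consistent sample of `U` w.r.t. `F₁ ∪ F₂`. -/
theorem stmt6 {Att V ι : Type} [Fintype Att] [Fintype V] [Fintype ι]
    (F1 F2 : Finset (Finset Att × Finset Att))
    (p : ι → Att → V → ℝ)
    (hnn : ∀ (i : ι) (a : Att) (v : V), 0 ≤ p i a v)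
    (hsum : ∀ (i : ι) (a : Att), ∑ v : V, p i a v = 1)
    (hdet : ∀ a ∈ (F1.sup fun fd => fd.1 ∪ fd.2) ∩ (F2.sup fun fd => fd.1 ∪ fd.2),
      ∀ i : ι, ∃ v : V, ∀ w : V, p i a w = if w = v then 1 else 0)
    (s1 s2 s' : ι → Att → V) :
    let A1 : Finset Att := F1.sup fun fd => fd.1 ∪ fd.2
    let A2 : Finset Att := F2.sup fun fd => fd.1 ∪ fd.2
    let Sat : Finset (Finset Att × Finset Att) → (ι → Att → V) → Prop := fun G s =>
      ∀ fd ∈ G, ∀ i j : ι, (∀ a ∈ fd.1, s i a = s j a) → ∀ a ∈ fd.2, s i a = s j a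
    let w1 : (ι → Att → V) → ℝ := fun s => ∏ i : ι, ∏ a ∈ A1, p i a (s i a)
    let w2 : (ι → Att → V) → ℝ := fun s => ∏ i : ι, ∏ a ∈ A2, p i a (s i a)
    let wr : (ι → Att → V) → ℝ := fun s =>
      ∏ i : ι, ∏ a ∈ Finset.univ \ (A1 ∪ A2), p i a (s i a)
    let w : (ι → Att → V) → ℝ := fun s => ∏ i : ι, ∏ a : Att, p i a (s i a)
    let comb : ι → Att → V := fun i a =>
      if a ∈ A1 then s1 i a else if a ∈ A2 then s2 i a else s' i a
    -- s1 is a most probable consistent sample of π_{Att(F₁)}U w.r.t. F₁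
    (Sat F1 s1 ∧ 0 < w1 s1 ∧ ∀ s, Sat F1 s → 0 < w1 s → w1 s ≤ w1 s1) →
    -- s2 is a most probable consistent sample of π_{Att(F₂)}U w.r.t. F₂
    (Sat F2 s2 ∧ 0 < w2 s2 ∧ ∀ s, Sat F2 s → 0 < w2 s → w2 s ≤ w2 s2) →
    -- s' is a maximum-probability sample of the projection to the remaining attributes
    (∀ s, wr s ≤ wr s') →
    -- then the combination is a most probable consistent sample of U w.r.t. F₁ ∪ F₂
    (Sat (F1 ∪ F2) comb ∧ 0 < w comb ∧ ∀ s, Sat (F1 ∪ F2) s → w s ≤ w comb) := by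
  intro A1 A2 Sat w1 w2 wr w comb ⟨hsat1, hpos1, hmax1⟩ ⟨hsat2, hpos2, hmax2⟩ hmax'
  have hcert : ∀ i, ∀ a ∈ A1 ∩ A2, IsCertain p i a := fun i a ha => hdet a ha i
  have hs1 := pos_of_sampleWeight_pos p hnn hpos1
  have hs2 := pos_of_sampleWeight_pos p hnn hpos2
  have hwcomb : w comb = w1 s1 * w2 s2 * wr s' := sampleWeight_join hcert hs1 hs2
  have hpos : 0 < w comb := by
    rw [hwcomb]
    exact mul_pos (mul_pos hpos1 hpos2) (sampleWeight_pos_of_forall_le p hsum hmax')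
  have hsat : Sat (F1 ∪ F2) comb := satisfies_union.2
    ⟨Satisfies.congr hsat1 join_eqOn_left,
      Satisfies.congr hsat2 (join_eqOn_right (eqOn_inter_of_isCertain hcert hs1 hs2))⟩
  refine ⟨hsat, hpos, fun s hs => ?_⟩
  rcases le_or_gt (w s) 0 with hws | hws
  · exact hws.trans hpos.le
  have hsp : ∀ i, ∀ a ∈ (univ : Finset Att), 0 < p i a (s i a) :=
    pos_of_sampleWeight_pos p hnn hws
  obtain ⟨hsF1, hsF2⟩ := satisfies_union.1 hs
  have hws_eq : w s = w1 s * w2 s * wr s :=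
    sampleWeight_univ_eq_mul_of_isCertain hcert fun i a _ => hsp i a (mem_univ a)
  rw [hws_eq, hwcomb]
  have hle1 := hmax1 s hsF1 (sampleWeight_pos p fun i a _ => hsp i a (mem_univ a))
  have hle2 := hmax2 s hsF2 (sampleWeight_pos p fun i a _ => hsp i a (mem_univ a))
  exact mul_le_mul (mul_le_mul hle1 hle2 (sampleWeight_nonneg p hnn _ s) hpos1.le) (hmax' s)
    (sampleWeight_nonneg p hnn _ s) (mul_pos hpos1 hpos2).le
end

section
/- Let U be a CIR over schema {A, ?B} and let G be the weighted complete bipartite graph with left vertex set V_A (the active domain of A, padded with dummy vertices connected to all right vertices with a fixed weight if |V_A| < |V_B|), right vertex set V_B (the union of the supports of the B-distributions), and weight of edge (a,b) equal to p(a,b) = ∏_{i: U[i][A]=a} Pr_{U[i][?B]}(b). Assume |V_A| ≤ |V_B|. Then the consistent samples of U with respect to {A → B, B → A} correspond to injections μ : V_A → V_B with p(a, μ(a)) > 0 for all a, the probability of the sample corresponding to μ is ∏_{a∈V_A} p(a, μ(a)), and a most probable consistent sample corresponds to an injection maximizing this product. If |V_A| > |V_B|, U has no consistent sample. -/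
/-!
The matching constraint `{A → B, B → A}` says exactly that a sample `r` factors as `μ ∘ A` with
`μ` injective on the active domain of `A`. Grouping the factors of the sample probability by
`A`-value turns `∏ i, p i (μ (A i))` into `∏ a, P a (μ a)`, so positivity and maximality transfer
between samples and injections, and an injection of `V_A` into `V_B` forces `|V_A| ≤ |V_B|`.
-/

open Finset

theorem Finset.prod_pos_iff_of_nonneg {ι R : Type*} [CommMonoidWithZero R] [PartialOrder R]
    [ZeroLEOneClass R] [PosMulStrictMono R] [Nontrivial R] [NoZeroDivisors R]
    {s : Finset ι} {f : ι → R} (h0 : ∀ i ∈ s, 0 ≤ f i) :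
    0 < ∏ i ∈ s, f i ↔ ∀ i ∈ s, 0 < f i :=
  ⟨fun h i hi => (h0 i hi).lt_of_ne' (prod_ne_zero_iff.mp h.ne' i hi), prod_pos⟩

theorem forall_eq_iff_comp_eq_iff_injOn_range {ι α β : Type*} (A : ι → α) (μ : α → β) :
    (∀ i j, A i = A j ↔ μ (A i) = μ (A j)) ↔ Set.InjOn μ (Set.range A) := by
  constructor
  · rintro h _ ⟨i, rfl⟩ _ ⟨j, rfl⟩ hij
    exact (h i j).mpr hij
  · exact fun h i j => ⟨congrArg μ, fun hij => h ⟨i, rfl⟩ ⟨j, rfl⟩ hij⟩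

namespace CIR

variable {ι α β : Type*} [Fintype ι] (A : ι → α) (p : ι → β → ℝ)

def IsConsistentSample (r : ι → β) : Prop :=
  0 < ∏ i, p i (r i) ∧ ∀ i j, (A i = A j ↔ r i = r j)

def fiberWeight [DecidableEq α] (a : α) (b : β) : ℝ :=
  ∏ i ∈ univ.filter (fun i => A i = a), p i b

variable {A p}

theorem IsConsistentSample.exists_eq_comp {r : ι → β} (hr : IsConsistentSample A p r) (e : α → β) :
    ∃ μ : α → β, ∀ i, r i = μ (A i) :=
  have hfac : r.FactorsThrough A := fun i j => (hr.2 i j).mp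
  ⟨Function.extend A r e, fun i => (hfac.extend_apply e i).symm⟩

variable [DecidableEq α]

theorem fiberWeight_nonneg (hnn : ∀ i b, 0 ≤ p i b) (a : α) (b : β) : 0 ≤ fiberWeight A p a b :=
  prod_nonneg fun i _ => hnn i b

theorem prod_eq_prod_fiberWeight {r : ι → β} {μ : α → β} (hμ : ∀ i, r i = μ (A i)) :
    ∏ i, p i (r i) = ∏ a ∈ univ.image A, fiberWeight A p a (μ a) := by
  simp only [hμ]
  rw [← prod_fiberwise_of_maps_to (fun i _ => mem_image_of_mem A (mem_univ i))]
  refine prod_congr rfl fun a _ => prod_congr rfl fun i hi => ?_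
  rw [(mem_filter.mp hi).2]

theorem exists_pos_of_fiberWeight_pos (hnn : ∀ i b, 0 ≤ p i b) {a : α} {b : β}
    (ha : a ∈ univ.image A) (hw : 0 < fiberWeight A p a b) : ∃ i, 0 < p i b := by
  obtain ⟨i, -, rfl⟩ := mem_image.mp ha
  exact ⟨i, (prod_pos_iff_of_nonneg fun j _ => hnn j b).mp hw i (by simp)⟩

theorem isConsistentSample_comp_iff (hnn : ∀ i b, 0 ≤ p i b) (μ : α → β) :
    IsConsistentSample A p (fun i => μ (A i)) ↔
      Set.InjOn μ ↑(univ.image A) ∧ ∀ a ∈ univ.image A, 0 < fiberWeight A p a (μ a) := by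
  rw [IsConsistentSample, forall_eq_iff_comp_eq_iff_injOn_range,
    prod_eq_prod_fiberWeight (A := A) (μ := μ) fun _ => rfl,
    prod_pos_iff_of_nonneg fun a _ => fiberWeight_nonneg hnn a (μ a), and_comm]
  simp only [coe_image, coe_univ, Set.image_univ]

section SameDomain

variable {V : Type*} [DecidableEq V] {A : ι → V} {p : ι → V → ℝ}

theorem isConsistentSample_iff [Fintype V] (hnn : ∀ i b, 0 ≤ p i b) (r : ι → V) :
    IsConsistentSample A p r ↔ ∃ μ : V → V, Set.InjOn μ ↑(univ.image A) ∧
      (∀ a ∈ univ.image A, μ a ∈ univ.filter (fun b => ∃ i, 0 < p i b)) ∧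
      (∀ a ∈ univ.image A, 0 < fiberWeight A p a (μ a)) ∧ ∀ i, r i = μ (A i) := by
  constructor
  · intro hr
    obtain ⟨μ, hμ⟩ := hr.exists_eq_comp id
    obtain rfl : r = fun i => μ (A i) := funext hμ
    obtain ⟨hinj, hw⟩ := (isConsistentSample_comp_iff hnn μ).mp hr
    refine ⟨μ, hinj, fun a ha => ?_, hw, hμ⟩
    exact mem_filter.mpr ⟨mem_univ _, exists_pos_of_fiberWeight_pos hnn ha (hw a ha)⟩
  · rintro ⟨μ, hinj, -, hw, hμ⟩
    obtain rfl : r = fun i => μ (A i) := funext hμ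
    exact (isConsistentSample_comp_iff hnn μ).mpr ⟨hinj, hw⟩

theorem card_image_le_card_support_of_isConsistentSample [Fintype V] (hnn : ∀ i b, 0 ≤ p i b)
    {r : ι → V} (hr : IsConsistentSample A p r) :
    (univ.image A).card ≤ (univ.filter (fun b => ∃ i, 0 < p i b)).card := by
  obtain ⟨μ, hinj, hmaps, -⟩ := (isConsistentSample_iff hnn r).mp hr
  exact card_le_card_of_injOn μ hmaps hinj

theorem forall_prod_le_iff_forall_prod_fiberWeight_le (hnn : ∀ i b, 0 ≤ p i b) {r : ι → V}
    {μ : V → V} (hμ : ∀ i, r i = μ (A i)) :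
    (∀ r', IsConsistentSample A p r' → ∏ i, p i (r' i) ≤ ∏ i, p i (r i)) ↔
      ∀ ν : V → V, Set.InjOn ν ↑(univ.image A) →
        (∀ a ∈ univ.image A, 0 < fiberWeight A p a (ν a)) →
        ∏ a ∈ univ.image A, fiberWeight A p a (ν a) ≤
          ∏ a ∈ univ.image A, fiberWeight A p a (μ a) := by
  rw [prod_eq_prod_fiberWeight hμ]
  constructor
  · intro hmax ν hinj hw
    rw [← prod_eq_prod_fiberWeight (A := A) (μ := ν) fun _ => rfl]
    exact hmax _ ((isConsistentSample_comp_iff hnn ν).mpr ⟨hinj, hw⟩)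
  · intro hmax r' hr'
    obtain ⟨ν, hν⟩ := hr'.exists_eq_comp id
    obtain rfl : r' = fun i => ν (A i) := funext hν
    obtain ⟨hinj, hw⟩ := (isConsistentSample_comp_iff hnn ν).mp hr'
    rw [prod_eq_prod_fiberWeight hν]
    exact hmax ν hinj hw

end SameDomain

end CIR

open CIR

open Classical in
theorem stmt13_general {ι V : Type} [Fintype ι] [Fintype V] [DecidableEq V]
    (Aval : ι → V) (p : ι → V → ℝ) (hnn : ∀ i b, 0 ≤ p i b) :
    let VA : Finset V := Finset.univ.image Aval
    let VB : Finset V := Finset.univ.filter (fun b => ∃ i, 0 < p i b)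
    let P : V → V → ℝ := fun a b => ∏ i ∈ Finset.univ.filter (fun i => Aval i = a), p i b
    let Consistent : (ι → V) → Prop := fun r =>
      0 < (∏ i : ι, p i (r i)) ∧ ∀ i j : ι, (Aval i = Aval j ↔ r i = r j)
    -- 1. consistent samples correspond to injections μ : V_A → V_B with p(a, μ a) > 0
    (∀ r : ι → V, Consistent r ↔
        ∃ μ : V → V, Set.InjOn μ ↑VA ∧ (∀ a ∈ VA, μ a ∈ VB) ∧
          (∀ a ∈ VA, 0 < P a (μ a)) ∧ (∀ i : ι, r i = μ (Aval i)))
    -- 2. the probability of the sample corresponding to μ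
    ∧ (∀ (r : ι → V) (μ : V → V), (∀ i : ι, r i = μ (Aval i)) →
        ∏ i : ι, p i (r i) = ∏ a ∈ VA, P a (μ a))
    -- 3. most probable consistent samples correspond to maximizing injections
    ∧ (∀ (r : ι → V) (μ : V → V), Consistent r → (∀ i : ι, r i = μ (Aval i)) →
        ((∀ r' : ι → V, Consistent r' → ∏ i : ι, p i (r' i) ≤ ∏ i : ι, p i (r i))
          ↔ ∀ ν : V → V, Set.InjOn ν ↑VA → (∀ a ∈ VA, 0 < P a (ν a)) →
              ∏ a ∈ VA, P a (ν a) ≤ ∏ a ∈ VA, P a (μ a)))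
    -- 4. if |V_A| > |V_B| then there is no consistent sample
    ∧ (VB.card < VA.card → ¬ ∃ r : ι → V, Consistent r) := by
  intro VA VB P Consistent
  exact ⟨isConsistentSample_iff hnn, fun _ _ hμ => prod_eq_prod_fiberWeight hμ,
    fun _ _ _ hμ => forall_prod_le_iff_forall_prod_fiberWeight_le hnn hμ,
    fun hlt ⟨r, hr⟩ => hlt.not_ge (card_image_le_card_support_of_isConsistentSample hnn hr)⟩

open Classical in
/-- For a CIR `U` over `{A, ?B}`, the consistent samples w.r.t. the matching
constraint `{A → B, B → A}` correspond to injections `μ` from the active domain `V_A` into the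
support union `V_B` with `p(a, μ(a)) > 0` for all `a ∈ V_A`; the probability of the sample
corresponding to `μ` is `∏_{a ∈ V_A} p(a, μ(a))`; a most probable consistent sample corresponds
to such an injection maximizing this product; and if `|V_A| > |V_B|` there is no consistent
sample. -/
theorem stmt13 {ι V : Type} [Fintype ι] [Fintype V] [DecidableEq ι] [DecidableEq V]
    (Aval : ι → V) (p : ι → V → ℝ) (hnn : ∀ i b, 0 ≤ p i b) :
    let VA : Finset V := Finset.univ.image Aval
    let VB : Finset V := Finset.univ.filter (fun b => ∃ i, 0 < p i b)
    let P : V → V → ℝ := fun a b => ∏ i ∈ Finset.univ.filter (fun i => Aval i = a), p i b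
    let Consistent : (ι → V) → Prop := fun r =>
      0 < (∏ i : ι, p i (r i)) ∧ ∀ i j : ι, (Aval i = Aval j ↔ r i = r j)
    -- 1. consistent samples correspond to injections μ : V_A → V_B with p(a, μ a) > 0
    (∀ r : ι → V, Consistent r ↔
        ∃ μ : V → V, Set.InjOn μ ↑VA ∧ (∀ a ∈ VA, μ a ∈ VB) ∧
          (∀ a ∈ VA, 0 < P a (μ a)) ∧ (∀ i : ι, r i = μ (Aval i)))
    -- 2. the probability of the sample corresponding to μ
    ∧ (∀ (r : ι → V) (μ : V → V), (∀ i : ι, r i = μ (Aval i)) →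
        ∏ i : ι, p i (r i) = ∏ a ∈ VA, P a (μ a))
    -- 3. most probable consistent samples correspond to maximizing injections
    ∧ (∀ (r : ι → V) (μ : V → V), Consistent r → (∀ i : ι, r i = μ (Aval i)) →
        ((∀ r' : ι → V, Consistent r' → ∏ i : ι, p i (r' i) ≤ ∏ i : ι, p i (r i))
          ↔ ∀ ν : V → V, Set.InjOn ν ↑VA → (∀ a ∈ VA, 0 < P a (ν a)) →
              ∏ a ∈ VA, P a (ν a) ≤ ∏ a ∈ VA, P a (μ a)))
    -- 4. if |V_A| > |V_B| then there is no consistent sample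
    ∧ (VB.card < VA.card → ¬ ∃ r : ι → V, Consistent r) :=
  stmt13_general Aval p hnn
end

section
/- Let U₀ be a CIR over schema {A, ?B} with A certain, and suppose R is a schema containing attributes A and ?B plus additional attributes (possibly uncertain), and F is a set of unary FDs over R in which ?B is equivalent to A. Construct U over R from U₀ by setting, for each identifier i and each attribute C ∈ R ∖ {A, ?B}, the cell U[i][C] to the fixed value U₀[i][A] (regardless of whether C is uncertain). If every FD in F has both sides in the closure class of A (i.e., every attribute of R is either equivalent to A or F mentions only attributes equivalent to A), then for every sample r₀ of U₀ with unique extension r₀⁺ to U: Pr_{U₀}(r₀) = Pr_U(r₀⁺), and r₀ satisfies {A → B, B → A} if and only if r₀⁺ satisfies F. -/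
/-!
Every column of `r₀⁺` other than `B` is a point mass at the `A` value, so the product over the
attributes collapses to the `B` factor. Two tuples of `r₀⁺` agree on some attribute iff they agree
on `A` or on `B`; under `A ↔ B` both happen together, and then the tuples agree everywhere, so
every FD holds. Conversely, the agreement set of two tuples of a relation satisfying `F` is closed
under `F`, hence contains the closure of `A` as soon as it contains `A` (and likewise for `B`);
as `A` and `B` have the same closure, agreement on `A` and on `B` are equivalent.
-/

/-- The closure of a set `S` of attributes under a set `F` of unary FDs:
`b ∈ UCl F S` iff `F` implies `S → b`. -/
def UCl {Att : Type} (F : Finset (Att × Att)) (S : Set Att) : Set Att :=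
  ⋂₀ {T : Set Att | S ⊆ T ∧ ∀ fd ∈ F, fd.1 ∈ T → fd.2 ∈ T}

section Closure

variable {Att : Type} (F : Finset (Att × Att))

theorem subset_UCl (S : Set Att) : S ⊆ UCl F S :=
  fun _ ha _ ⟨hS, _⟩ => hS ha

theorem UCl_subset {S T : Set Att} (hST : S ⊆ T) (hT : ∀ fd ∈ F, fd.1 ∈ T → fd.2 ∈ T) :
    UCl F S ⊆ T :=
  Set.sInter_subset_of_mem ⟨hST, hT⟩

def SatisfiesFDs {ι V : Type} (r : ι → Att → V) : Prop :=
  ∀ fd ∈ F, ∀ i j : ι, r i fd.1 = r j fd.1 → r i fd.2 = r j fd.2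

variable {F}

theorem SatisfiesFDs.agree_of_mem_UCl {ι V : Type} {r : ι → Att → V} (hr : SatisfiesFDs F r)
    {a c : Att} (hc : c ∈ UCl F {a}) {i j : ι} (hij : r i a = r j a) : r i c = r j c :=
  UCl_subset F (T := {c | r i c = r j c}) (Set.singleton_subset_iff.2 hij)
    (fun fd hfd => hr fd hfd i j) hc

theorem SatisfiesFDs.agree_iff_of_UCl_eq {ι V : Type} {r : ι → Att → V} (hr : SatisfiesFDs F r)
    {a c : Att} (hac : UCl F {a} = UCl F {c}) (i j : ι) : r i a = r j a ↔ r i c = r j c :=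
  ⟨hr.agree_of_mem_UCl (hac ▸ subset_UCl F {c} rfl),
    hr.agree_of_mem_UCl (hac ▸ subset_UCl F {a} rfl)⟩

end Closure

section CopyExtension

variable {Att V ι : Type} [DecidableEq Att] (attB : Att) (Aval b : ι → V)

/-- The extension `r₀⁺` of the sample `b` to `U`. -/
def copyExtension : ι → Att → V := fun i a => if a = attB then b i else Aval i

variable {attB Aval b}

theorem prod_copyExtension [Fintype Att] [DecidableEq V] {p : V → ℝ} {q : Att → V → ℝ} {i : ι}
    (hqB : q attB = p) (hqO : ∀ a, a ≠ attB → ∀ w, q a w = if w = Aval i then 1 else 0) :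
    ∏ a : Att, q a (copyExtension attB Aval b i a) = p (b i) := by
  rw [Finset.prod_eq_single attB (fun a _ ha => by simp [copyExtension, ha, hqO a ha])
    (by simp)]
  simp [copyExtension, hqB]

theorem copyExtension_agree_iff (hAB : ∀ i j, Aval i = Aval j ↔ b i = b j) (c : Att) (i j : ι) :
    copyExtension attB Aval b i c = copyExtension attB Aval b j c ↔ Aval i = Aval j := by
  by_cases hc : c = attB <;> simp [copyExtension, hc, hAB]

theorem satisfiesFDs_copyExtension (F : Finset (Att × Att))
    (hAB : ∀ i j, Aval i = Aval j ↔ b i = b j) : SatisfiesFDs F (copyExtension attB Aval b) :=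
  fun fd _ i j h =>
    (copyExtension_agree_iff hAB fd.2 i j).2 ((copyExtension_agree_iff hAB fd.1 i j).1 h)

end CopyExtension

theorem stmt15_general {Att V ι : Type} [Fintype Att] [Fintype ι] [DecidableEq Att] [DecidableEq V]
    (attA attB : Att) (hAB : attA ≠ attB)
    (F : Finset (Att × Att))
    (hequiv : UCl F {attA} = UCl F {attB})
    (Aval : ι → V) (p : ι → V → ℝ)
    (q : ι → Att → V → ℝ)
    (hqB : ∀ i : ι, q i attB = p i)
    (hqO : ∀ (i : ι) (a : Att), a ≠ attB → ∀ w : V, q i a w = if w = Aval i then 1 else 0)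
    (b : ι → V) :
    let rplus : ι → Att → V := fun i a => if a = attB then b i else Aval i
    -- the probability of the extension equals the probability of the original sample
    ((∏ i : ι, ∏ a : Att, q i a (rplus i a)) = ∏ i : ι, p i (b i))
    -- and satisfaction of the matching constraint transfers exactly
    ∧ ((∀ i j : ι, (Aval i = Aval j ↔ b i = b j))
        ↔ ∀ fd ∈ F, ∀ i j : ι,
            rplus i fd.1 = rplus j fd.1 → rplus i fd.2 = rplus j fd.2) := by
  show (∏ i, ∏ a, q i a (copyExtension attB Aval b i a)) = ∏ i, p i (b i) ∧
    ((∀ i j, (Aval i = Aval j ↔ b i = b j)) ↔ SatisfiesFDs F (copyExtension attB Aval b))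
  refine ⟨Finset.prod_congr rfl fun i _ => prod_copyExtension (hqB i) (hqO i),
    satisfiesFDs_copyExtension F, fun hsat i j => ?_⟩
  simpa [copyExtension, hAB] using hsat.agree_iff_of_UCl_eq hequiv i j

/-- Let `U₀` be a CIR over `{A, ?B}` (`A` certain with values `Aval`, `?B`
with cell distributions `p`), let `R` be a schema containing `A` and `?B` plus further
attributes, and let `F` be a set of unary FDs over `R` in which `?B` is equivalent to `A` and
every FD has both sides in the closure class of `A`.  Construct `U` from `U₀` by copying the
`A` column into every other attribute (deterministic point-mass cells `q`).  Then for every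
sample `r₀` of `U₀` (a `B`-choice `b`), with `r₀⁺` its unique extension to `U`:
`Pr_{U₀}(r₀) = Pr_U(r₀⁺)`, and `r₀ ⊨ {A → B, B → A}` iff `r₀⁺ ⊨ F`. -/
theorem stmt15 {Att V ι : Type} [Fintype Att] [Fintype ι] [DecidableEq Att] [DecidableEq V]
    (attA attB : Att) (hAB : attA ≠ attB)
    (F : Finset (Att × Att))
    (hequiv : UCl F {attA} = UCl F {attB})
    (hcls : ∀ fd ∈ F, UCl F {fd.1} = UCl F {attA} ∧ UCl F {fd.2} = UCl F {attA})
    (Aval : ι → V) (p : ι → V → ℝ)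
    (q : ι → Att → V → ℝ)
    (hqB : ∀ i : ι, q i attB = p i)
    (hqO : ∀ (i : ι) (a : Att), a ≠ attB → ∀ w : V, q i a w = if w = Aval i then 1 else 0)
    (b : ι → V) :
    let rplus : ι → Att → V := fun i a => if a = attB then b i else Aval i
    -- the probability of the extension equals the probability of the original sample
    ((∏ i : ι, ∏ a : Att, q i a (rplus i a)) = ∏ i : ι, p i (b i))
    -- and satisfaction of the matching constraint transfers exactly
    ∧ ((∀ i j : ι, (Aval i = Aval j ↔ b i = b j))
        ↔ ∀ fd ∈ F, ∀ i j : ι,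
            rplus i fd.1 = rplus j fd.1 → rplus i fd.2 = rplus j fd.2) :=
  stmt15_general attA attB hAB F hequiv Aval p q hqB hqO b
end
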